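/- Sub-Leibniz rule: let f, g, h be locally Lipschitz on a metric space X with f ≥ 0 and h ≥ 0. Then D⁺(fh)(∇g)(x) ≤ f(x)·D⁺h(∇g)(x) + h(x)·D⁺f(∇g)(x) for every x ∈ X, where D⁺u(∇g)(x) := inf_{ε>0} (lip(g+εu)²(x) − lip(g)²(x))/(2ε). -/

import Mathlib

open Filter Metric MeasureTheory Topology

variable {X : Type*} [MetricSpace X]

open Classical in
noncomputable def lipSlope (f : X → ℝ) (x : X) : ℝ :=
  if (𝓝[≠] x) = ⊥ then 0
  else Filter.limsup (fun y => |f x - f y| / dist x y) (𝓝[≠] x)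

noncomputable def Dplus (f g : X → ℝ) (x : X) : ℝ :=
  sInf ((fun ε : ℝ =>
    ((lipSlope (fun y => g y + ε * f y) x) ^ 2 - (lipSlope g x) ^ 2) / (2 * ε)) '' Set.Ioi 0)

noncomputable def Dminus (f g : X → ℝ) (x : X) : ℝ :=
  sSup ((fun ε : ℝ =>
    ((lipSlope (fun y => g y + ε * f y) x) ^ 2 - (lipSlope g x) ^ 2) / (2 * ε)) '' Set.Iio 0)

/-! For `u` among `f`, `h`, `f h`, the map `ε ↦ lip(g + εu)(x)` is convex and nonnegative, so its
square is convex and the difference quotient `(lip(g + εu)² - lip(g)²)/(2ε)` is monotone in `ε > 0`;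
hence `D⁺u(∇g)(x)` is its limit as `ε → 0⁺`. Near `x` the product `f h` agrees with its
linearisation `f(x) h + h(x) f` up to `o(d(x, ·))`, which does not change slopes. Writing
`a = f(x)`, `b = h(x)`, `c = a + b > 0`, the function `g + (ε/c)(a h + b f)` is the convex
combination `(a/c)(g + εh) + (b/c)(g + εf)`, so convexity of the slope and of `t ↦ t²` bound the
quotient of `f h` at `ε/c` by `a` times that of `h` plus `b` times that of `f` at `ε`; letting
`ε → 0⁺` gives the claim (the case `a = b = 0` is immediate). -/

open Set

lemma LocallyLipschitz.real_mul {α : Type*} [PseudoMetricSpace α] {f g : α → ℝ}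
    (hf : LocallyLipschitz f) (hg : LocallyLipschitz g) :
    LocallyLipschitz fun y => f y * g y := by
  intro x
  obtain ⟨Kf, s, hs, hKf⟩ := hf x
  obtain ⟨Kg, t, ht, hKg⟩ := hg x
  set M := |f x| + |g x| + 1
  have hbound (u : α → ℝ) (hu : Continuous u) (hux : |u x| < M) : ∀ᶠ y in 𝓝 x, |u y| ≤ M :=
    (hu.abs.continuousAt.eventually (gt_mem_nhds hux)).mono fun _ => le_of_lt
  have hfM := hbound f hf.continuous (by simp only [M]; linarith [abs_nonneg (g x)])
  have hgM := hbound g hg.continuous (by simp only [M]; linarith [abs_nonneg (f x)])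
  refine ⟨(M * (Kf + Kg)).toNNReal, s ∩ t ∩ {y | |f y| ≤ M ∧ |g y| ≤ M},
    inter_mem (inter_mem hs ht) (hfM.and hgM), LipschitzOnWith.of_dist_le' ?_⟩
  rintro y ⟨⟨hys, hyt⟩, hyf, -⟩ z ⟨⟨hzs, hzt⟩, -, hzg⟩
  have hdf := hKf.dist_le_mul y hys z hzs
  have hdg := hKg.dist_le_mul y hyt z hzt
  rw [Real.dist_eq] at hdf hdg ⊢
  calc |f y * g y - f z * g z| = |f y * (g y - g z) + g z * (f y - f z)| := by ring_nf
    _ ≤ |f y| * |g y - g z| + |g z| * |f y - f z| := by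
        rw [← abs_mul, ← abs_mul]; exact abs_add_le _ _
    _ ≤ M * (Kg * dist y z) + M * (Kf * dist y z) := by gcongr
    _ = M * (Kf + Kg) * dist y z := by ring

section

variable {u v w f g h : X → ℝ} {x : X}

lemma LocallyLipschitz.add_const_mul (hg : LocallyLipschitz g) (hu : LocallyLipschitz u)
    (ε : ℝ) : LocallyLipschitz fun y => g y + ε * u y :=
  hg.add ((LocallyLipschitz.const ε).real_mul hu)

noncomputable def slopeQuot (u : X → ℝ) (x y : X) : ℝ := |u x - u y| / dist x y

lemma slopeQuot_nonneg (u : X → ℝ) (x y : X) : 0 ≤ slopeQuot u x y := by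
  unfold slopeQuot; positivity

lemma LocallyLipschitz.isBoundedUnder_slopeQuot (hu : LocallyLipschitz u) (x : X) :
    IsBoundedUnder (· ≤ ·) (𝓝[≠] x) (slopeQuot u x) := by
  obtain ⟨K, t, ht, hK⟩ := hu x
  refine ⟨K, eventually_map.2 ?_⟩
  filter_upwards [nhdsWithin_le_nhds ht, self_mem_nhdsWithin] with y hy hyx
  rw [slopeQuot, div_le_iff₀ (dist_pos.2 (Ne.symm hyx)), ← Real.dist_eq]
  exact hK.dist_le_mul x (mem_of_mem_nhds ht) y hy

lemma lipSlope_nonneg (u : X → ℝ) (x : X) : 0 ≤ lipSlope u x := by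
  unfold lipSlope
  split_ifs with hx
  · rfl
  · have : (𝓝[≠] x).NeBot := ⟨hx⟩
    refine Real.sInf_nonneg fun a ha => ?_
    have ha' : ∀ᶠ y in 𝓝[≠] x, slopeQuot u x y ≤ a := ha
    obtain ⟨y, hy⟩ := ha'.exists
    exact (slopeQuot_nonneg u x y).trans hy

lemma Filter.limsup_const_mul_le_of_nonneg {ι : Type*} {l : Filter ι} [l.NeBot]
    {q : ι → ℝ} (hq : IsBoundedUnder (· ≤ ·) l q) (hq0 : ∀ i, 0 ≤ q i) {c : ℝ} (hc : 0 ≤ c) :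
    limsup (fun i => c * q i) l ≤ c * limsup q l :=
  (limsup_mul_le (u := fun _ => c) (.of_forall fun _ => hc) isBoundedUnder_const
    (.of_forall hq0) hq).trans_eq (by rw [limsup_const])

lemma lipSlope_le_of_abs_sub_le {s t : ℝ} (hs : 0 ≤ s) (ht : 0 ≤ t)
    (hv : IsBoundedUnder (· ≤ ·) (𝓝[≠] x) (slopeQuot v x))
    (hw : IsBoundedUnder (· ≤ ·) (𝓝[≠] x) (slopeQuot w x))
    (huvw : ∀ y, |u x - u y| ≤ s * |v x - v y| + t * |w x - w y|) :
    lipSlope u x ≤ s * lipSlope v x + t * lipSlope w x := by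
  by_cases hx : 𝓝[≠] x = ⊥
  · simp [lipSlope, hx]
  have : (𝓝[≠] x).NeBot := ⟨hx⟩
  have hsv : IsBoundedUnder (· ≤ ·) (𝓝[≠] x) (fun y => s * slopeQuot v x y) :=
    (monotone_mul_left_of_nonneg hs).isBoundedUnder_le_comp hv
  have htw : IsBoundedUnder (· ≤ ·) (𝓝[≠] x) (fun y => t * slopeQuot w x y) :=
    (monotone_mul_left_of_nonneg ht).isBoundedUnder_le_comp hw
  simp only [lipSlope, if_neg hx]
  calc limsup (slopeQuot u x) (𝓝[≠] x)
      ≤ limsup (fun y => s * slopeQuot v x y + t * slopeQuot w x y) (𝓝[≠] x) := by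
        refine limsup_le_limsup (.of_forall fun y => ?_)
          (isCoboundedUnder_le_of_le _ (slopeQuot_nonneg u x)) (isBoundedUnder_le_add hsv htw)
        simp only [slopeQuot, mul_div_assoc', ← add_div]
        exact div_le_div_of_nonneg_right (huvw y) dist_nonneg
    _ ≤ limsup (fun y => s * slopeQuot v x y) (𝓝[≠] x)
          + limsup (fun y => t * slopeQuot w x y) (𝓝[≠] x) :=
        limsup_add_le (isBoundedUnder_of_eventually_ge (.of_forall fun y =>
            mul_nonneg hs (slopeQuot_nonneg v x y))) hsv
          (isCoboundedUnder_le_of_le _ fun y => mul_nonneg ht (slopeQuot_nonneg w x y)) htw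
    _ ≤ _ := add_le_add (limsup_const_mul_le_of_nonneg hv (slopeQuot_nonneg v x) hs)
          (limsup_const_mul_le_of_nonneg hw (slopeQuot_nonneg w x) ht)

lemma lipSlope_mul_add_mul_le {s t : ℝ} (hs : 0 ≤ s) (ht : 0 ≤ t)
    (hv : IsBoundedUnder (· ≤ ·) (𝓝[≠] x) (slopeQuot v x))
    (hw : IsBoundedUnder (· ≤ ·) (𝓝[≠] x) (slopeQuot w x)) :
    lipSlope (fun y => s * v y + t * w y) x ≤ s * lipSlope v x + t * lipSlope w x := by
  refine lipSlope_le_of_abs_sub_le hs ht hv hw fun y => ?_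
  calc |s * v x + t * w x - (s * v y + t * w y)| = |s * (v x - v y) + t * (w x - w y)| := by
        ring_nf
    _ ≤ s * |v x - v y| + t * |w x - w y| := by
        refine (abs_add_le _ _).trans_eq ?_
        rw [abs_mul, abs_mul, abs_of_nonneg hs, abs_of_nonneg ht]

lemma lipSlope_eq_zero_of_tendsto (hu : Tendsto (slopeQuot u x) (𝓝[≠] x) (𝓝 0)) :
    lipSlope u x = 0 := by
  unfold lipSlope
  split_ifs with hx
  · rfl
  · have : (𝓝[≠] x).NeBot := ⟨hx⟩
    exact hu.limsup_eq

lemma lipSlope_le_of_tendsto (hv : IsBoundedUnder (· ≤ ·) (𝓝[≠] x) (slopeQuot v x))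
    (huv : Tendsto (slopeQuot (fun y => u y - v y) x) (𝓝[≠] x) (𝓝 0)) :
    lipSlope u x ≤ lipSlope v x := by
  have := lipSlope_le_of_abs_sub_le (u := u) zero_le_one zero_le_one hv huv.isBoundedUnder_le
    fun y => by
      rw [one_mul, one_mul]
      calc |u x - u y| = |(v x - v y) + (u x - v x - (u y - v y))| := by ring_nf
        _ ≤ _ := abs_add_le _ _
  simpa [lipSlope_eq_zero_of_tendsto huv] using this

lemma tendsto_slopeQuot_mul_sub_mul_sub (c : ℝ) (hf : ContinuousAt f x)
    (hh : IsBoundedUnder (· ≤ ·) (𝓝[≠] x) (slopeQuot h x)) :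
    Tendsto (slopeQuot (fun y => c * ((f y - f x) * (h y - h x))) x) (𝓝[≠] x) (𝓝 0) := by
  have hquot : slopeQuot (fun y => c * ((f y - f x) * (h y - h x))) x
      = fun y => |c * (f x - f y)| * slopeQuot h x y := by
    funext y
    rw [slopeQuot, slopeQuot, mul_div_assoc', ← abs_mul, ← abs_neg]
    congr 2
    ring
  have hfx : Tendsto (fun y => |c * (f x - f y)|) (𝓝[≠] x) (𝓝 0) := by
    have : Tendsto (fun y => c * (f x - f y)) (𝓝 x) (𝓝 (c * (f x - f x))) :=
      tendsto_const_nhds.mul (tendsto_const_nhds.sub hf)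
    simpa using (this.abs).mono_left nhdsWithin_le_nhds
  rw [hquot]
  refine hfx.zero_mul_isBoundedUnder_le ?_
  simpa only [Function.comp_def, Real.norm_of_nonneg (slopeQuot_nonneg h x _)] using hh

/-- The linearisation error `ε (f - f x) (h - h x)` is `o(d(x, ·))`. -/
lemma lipSlope_add_mul_mul_le (hf : LocallyLipschitz f) (hg : LocallyLipschitz g)
    (hh : LocallyLipschitz h) (ε : ℝ) :
    lipSlope (fun y => g y + ε * (f y * h y)) x
      ≤ lipSlope (fun y => g y + ε * (f x * h y + h x * f y)) x := by
  have hlin : LocallyLipschitz (fun y => g y + ε * (f x * h y + h x * f y)) :=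
    hg.add_const_mul (((LocallyLipschitz.const _).real_mul hh).add
      ((LocallyLipschitz.const _).real_mul hf)) ε
  refine lipSlope_le_of_tendsto (hlin.isBoundedUnder_slopeQuot x) ?_
  have hquot : slopeQuot (fun y => (g y + ε * (f y * h y)) - (g y + ε * (f x * h y + h x * f y))) x
      = slopeQuot (fun y => ε * ((f y - f x) * (h y - h x))) x := by
    funext y
    simp only [slopeQuot]
    ring_nf
  rw [hquot]
  exact tendsto_slopeQuot_mul_sub_mul_sub ε hf.continuous.continuousAt
    (hh.isBoundedUnder_slopeQuot x)

lemma convexOn_lipSlope_add_mul (hg : LocallyLipschitz g) (hu : LocallyLipschitz u) (x : X) :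
    ConvexOn ℝ univ fun ε => lipSlope (fun y => g y + ε * u y) x := by
  refine ⟨convex_univ, fun ε₁ _ ε₂ _ a b ha hb hab => ?_⟩
  have hcomb : (fun y => g y + (a * ε₁ + b * ε₂) * u y)
      = fun y => a * (g y + ε₁ * u y) + b * (g y + ε₂ * u y) := by
    funext y
    linear_combination (-g y) * hab
  simp only [smul_eq_mul]
  rw [hcomb]
  exact lipSlope_mul_add_mul_le ha hb ((hg.add_const_mul hu ε₁).isBoundedUnder_slopeQuot x)
    ((hg.add_const_mul hu ε₂).isBoundedUnder_slopeQuot x)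

/-- `Dplus u g x` is, by definition, `sInf (dplusQuot u g x '' Ioi 0)`. -/
noncomputable def dplusQuot (u g : X → ℝ) (x : X) (ε : ℝ) : ℝ :=
  ((lipSlope (fun y => g y + ε * u y) x) ^ 2 - (lipSlope g x) ^ 2) / (2 * ε)

lemma neg_mul_le_dplusQuot (hg : LocallyLipschitz g) (hu : LocallyLipschitz u) {ε : ℝ}
    (hε : 0 < ε) : -(lipSlope u x * lipSlope g x) ≤ dplusQuot u g x ε := by
  have hGL : lipSlope g x ≤ 1 * lipSlope (fun y => g y + ε * u y) x + ε * lipSlope u x := by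
    refine lipSlope_le_of_abs_sub_le zero_le_one hε.le
      ((hg.add_const_mul hu ε).isBoundedUnder_slopeQuot x) (hu.isBoundedUnder_slopeQuot x)
      fun y => ?_
    calc |g x - g y| = |(g x + ε * u x - (g y + ε * u y)) + -ε * (u x - u y)| := by ring_nf
      _ ≤ _ := by
        refine (abs_add_le _ _).trans_eq ?_
        rw [abs_mul, abs_neg, abs_of_pos hε, one_mul]
  have hG := lipSlope_nonneg g x
  have hU := lipSlope_nonneg u x
  have hL := lipSlope_nonneg (fun y => g y + ε * u y) x
  rw [dplusQuot, le_div_iff₀ (by positivity)]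
  rcases le_total (lipSlope g x) (lipSlope (fun y => g y + ε * u y) x) with hLG | hLG
  · nlinarith [mul_nonneg (mul_nonneg hU hG) hε.le]
  · nlinarith [mul_le_mul_of_nonneg_left hLG hU, mul_nonneg (mul_nonneg hU hG) hε.le]

lemma monotoneOn_dplusQuot (hg : LocallyLipschitz g) (hu : LocallyLipschitz u) :
    MonotoneOn (dplusQuot u g x) (Ioi 0) := by
  intro ε₁ hε₁ ε₂ hε₂ hε
  have hsq := (convexOn_lipSlope_add_mul hg hu x).pow (fun ε _ => lipSlope_nonneg _ x) 2
  have := hsq.secant_mono (mem_univ 0) (mem_univ ε₁) (mem_univ ε₂) (ne_of_gt hε₁)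
    (ne_of_gt hε₂) hε
  simp only [Pi.pow_apply, zero_mul, add_zero, sub_zero] at this
  simp only [dplusQuot, mul_comm (2 : ℝ), ← div_div]
  exact div_le_div_of_nonneg_right this zero_le_two

lemma bddBelow_dplusQuot (hg : LocallyLipschitz g) (hu : LocallyLipschitz u) :
    BddBelow (dplusQuot u g x '' Ioi 0) :=
  ⟨_, forall_mem_image.2 fun _ hε => neg_mul_le_dplusQuot hg hu hε⟩

lemma Dplus_le_dplusQuot (hg : LocallyLipschitz g) (hu : LocallyLipschitz u) {ε : ℝ}
    (hε : 0 < ε) : Dplus u g x ≤ dplusQuot u g x ε :=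
  csInf_le (bddBelow_dplusQuot hg hu) (mem_image_of_mem _ hε)

lemma tendsto_dplusQuot (hg : LocallyLipschitz g) (hu : LocallyLipschitz u) :
    Tendsto (dplusQuot u g x) (𝓝[>] 0) (𝓝 (Dplus u g x)) :=
  (monotoneOn_dplusQuot hg hu).tendsto_nhdsGT (bddBelow_dplusQuot hg hu)

lemma dplusQuot_mul_le_of_pos (hf : LocallyLipschitz f) (hg : LocallyLipschitz g)
    (hh : LocallyLipschitz h) (ha : 0 ≤ f x) (hb : 0 ≤ h x) (hc : 0 < f x + h x) {ε : ℝ}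
    (hε : 0 < ε) :
    dplusQuot (fun y => f y * h y) g x (ε / (f x + h x))
      ≤ f x * dplusQuot h g x ε + h x * dplusQuot f g x ε := by
  set a := f x
  set b := h x
  set c := a + b
  have hlin : (fun y => g y + ε / c * (a * h y + b * f y))
      = fun y => a / c * (g y + ε * h y) + b / c * (g y + ε * f y) := by
    funext y
    field_simp
    ring
  have hL : lipSlope (fun y => g y + ε / c * (f y * h y)) x
      ≤ a / c * lipSlope (fun y => g y + ε * h y) x + b / c * lipSlope (fun y => g y + ε * f y) x :=
    (lipSlope_add_mul_mul_le hf hg hh _).trans <| hlin ▸ lipSlope_mul_add_mul_le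
      (div_nonneg ha hc.le) (div_nonneg hb hc.le)
      ((hg.add_const_mul hh ε).isBoundedUnder_slopeQuot x)
      ((hg.add_const_mul hf ε).isBoundedUnder_slopeQuot x)
  set L := lipSlope (fun y => g y + ε / c * (f y * h y)) x
  set A := lipSlope (fun y => g y + ε * h y) x
  set B := lipSlope (fun y => g y + ε * f y) x
  set G := lipSlope g x
  have hA := lipSlope_nonneg (fun y => g y + ε * h y) x
  have hB := lipSlope_nonneg (fun y => g y + ε * f y) x
  have hL0 := lipSlope_nonneg (fun y => g y + ε / c * (f y * h y)) x
  have hcL : c * L ≤ a * A + b * B := by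
    have := mul_le_mul_of_nonneg_left hL hc.le
    field_simp at this
    linarith
  have hsq : c * L ^ 2 ≤ a * A ^ 2 + b * B ^ 2 := by
    have h1 : (c * L) ^ 2 ≤ (a * A + b * B) ^ 2 := pow_le_pow_left₀ (by positivity) hcL 2
    have h2 : (a * A + b * B) ^ 2 ≤ c * (a * A ^ 2 + b * B ^ 2) := by
      nlinarith [mul_nonneg (mul_nonneg ha hb) (sq_nonneg (A - B))]
    nlinarith
  have hlhs : (L ^ 2 - G ^ 2) / (2 * (ε / c)) = c * (L ^ 2 - G ^ 2) / (2 * ε) := by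
    field_simp
  rw [dplusQuot, dplusQuot, dplusQuot, hlhs, mul_div_assoc', mul_div_assoc', ← add_div]
  exact div_le_div_of_nonneg_right (by nlinarith) (by positivity)

lemma Dplus_mul_le_dplusQuot (hf : LocallyLipschitz f) (hg : LocallyLipschitz g)
    (hh : LocallyLipschitz h) (ha : 0 ≤ f x) (hb : 0 ≤ h x) {ε : ℝ} (hε : 0 < ε) :
    Dplus (fun y => f y * h y) g x ≤ f x * dplusQuot h g x ε + h x * dplusQuot f g x ε := by
  have hfh := hf.real_mul hh
  rcases (add_nonneg ha hb).eq_or_lt with hc | hc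
  · have hfx : f x = 0 := by linarith
    have hhx : h x = 0 := by linarith
    have hL : lipSlope (fun y => g y + 1 * (f y * h y)) x ≤ lipSlope g x := by
      simpa [hfx, hhx] using lipSlope_add_mul_mul_le hf hg hh (x := x) 1
    calc Dplus (fun y => f y * h y) g x ≤ dplusQuot (fun y => f y * h y) g x 1 :=
          Dplus_le_dplusQuot hg hfh one_pos
      _ ≤ 0 := div_nonpos_of_nonpos_of_nonneg
          (sub_nonpos.2 (pow_le_pow_left₀ (lipSlope_nonneg _ x) hL 2)) (by norm_num)
      _ = f x * dplusQuot h g x ε + h x * dplusQuot f g x ε := by simp [hfx, hhx]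
  · exact (Dplus_le_dplusQuot hg hfh (div_pos hε hc)).trans
      (dplusQuot_mul_le_of_pos hf hg hh ha hb hc hε)

end

theorem Dplus_leibniz (f g h : X → ℝ)
    (hf : LocallyLipschitz f) (hg : LocallyLipschitz g) (hh : LocallyLipschitz h)
    (hf0 : ∀ y, 0 ≤ f y) (hh0 : ∀ y, 0 ≤ h y) :
    ∀ x : X, Dplus (fun y => f y * h y) g x ≤ f x * Dplus h g x + h x * Dplus f g x := by
  intro x
  have hlim := ((tendsto_dplusQuot (x := x) hg hh).const_mul (f x)).add
    ((tendsto_dplusQuot (x := x) hg hf).const_mul (h x))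
  exact ge_of_tendsto hlim (eventually_nhdsWithin_of_forall fun ε hε =>
    Dplus_mul_le_dplusQuot hf hg hh (hf0 x) (hh0 x) hε)
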